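/- arXiv:1712.05254 — 2 statements merged into one kernel-verified Lean document; each statement's English description precedes it below -/
import Mathlib

section
/- If X is a normally distributed random variable with mean μ and variance σ² (σ > 0), then E[(e^X − K)⁺] = e^{μ + σ²/2} Φ(d₂ + σ) − K Φ(d₂), where K > 0, d₂ = (μ − ln K)/σ, and Φ is the standard normal CDF. -/
open MeasureTheory ProbabilityTheory Real
open scoped NNReal ENNReal

noncomputable def stdNormalCDF (x : ℝ) : ℝ :=
  ((gaussianReal 0 1) (Set.Iic x)).toReal

lemma gauss_neg_aux : (gaussianReal 0 1).map (fun y : ℝ => -y) = gaussianReal 0 1 := by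
  have h := gaussianReal_map_const_mul (μ := 0) (v := 1) (-1)
  have h2 : (fun y : ℝ => -1 * y) = fun y : ℝ => -y := by funext y; ring
  have h3 : (NNReal.mk ((-1 : ℝ)^2) (sq_nonneg _)) * 1 = 1 := by
    refine NNReal.coe_injective ?_
    norm_num
  rw [h2, h3] at h
  simpa using h

lemma gauss_map_aux (m σ : ℝ) (hσ : 0 < σ) :
    (gaussianReal 0 1).map (fun y => σ * y + m) = gaussianReal m ((σ^2).toNNReal) := by
  have h1 : (fun y : ℝ => σ * y + m) = (fun y => y + m) ∘ (fun y => σ * y) := rfl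
  rw [h1, ← Measure.map_map (measurable_add_const m) (measurable_const_mul σ)]
  have h2 : (gaussianReal 0 1).map (fun y => σ * y) = gaussianReal 0 ((σ^2).toNNReal) := by
    have h := gaussianReal_map_const_mul (μ := 0) (v := 1) σ
    have h3 : (NNReal.mk (σ^2) (sq_nonneg _)) * 1 = (σ^2).toNNReal := by
      refine NNReal.coe_injective ?_
      simp [Real.coe_toNNReal _ (sq_nonneg σ)]
    rw [h3, mul_zero] at h
    exact h
  rw [h2, gaussianReal_map_add_const m, zero_add]

lemma gauss_Ici_aux (m σ a : ℝ) (hσ : 0 < σ) :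
    ((gaussianReal m ((σ^2).toNNReal)) (Set.Ici a)).toReal = stdNormalCDF ((m - a)/σ) := by
  rw [← gauss_map_aux m σ hσ,
    Measure.map_apply (by fun_prop) measurableSet_Ici]
  have hpre : (fun y : ℝ => σ * y + m) ⁻¹' Set.Ici a = Set.Ici ((a - m)/σ) := by
    ext y
    simp only [Set.mem_preimage, Set.mem_Ici, div_le_iff₀ hσ]
    constructor <;> intro hy <;> nlinarith
  rw [hpre]
  have hneg : Set.Ici ((a-m)/σ) = (fun y : ℝ => -y) ⁻¹' Set.Iic ((m-a)/σ) := by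
    have hd : (m-a)/σ = -((a-m)/σ) := by rw [← neg_div, neg_sub]
    ext y
    simp only [Set.mem_preimage, Set.mem_Iic, Set.mem_Ici, hd, neg_le_neg_iff]
  rw [hneg, ← Measure.map_apply measurable_neg measurableSet_Iic, gauss_neg_aux]
  rfl

lemma pdf_exp_aux (m σ : ℝ) (hσ : 0 < σ) (x : ℝ) :
    Real.exp x * gaussianPDFReal m ((σ^2).toNNReal) x
      = Real.exp (m + σ^2/2) * gaussianPDFReal (m + σ^2) ((σ^2).toNNReal) x := by
  have h2 : (((σ^2).toNNReal : ℝ≥0) : ℝ) = σ^2 := Real.coe_toNNReal _ (sq_nonneg σ)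
  simp only [gaussianPDFReal, h2]
  rw [mul_left_comm, mul_left_comm (rexp (m + σ^2/2)), ← Real.exp_add, ← Real.exp_add]
  congr 2
  have hσ2 : σ^2 ≠ 0 := by positivity
  field_simp
  ring

lemma setIntegral_gauss_density {m : ℝ} {v : ℝ≥0} (hv : v ≠ 0) (g : ℝ → ℝ) {s : Set ℝ}
    (hs : MeasurableSet s) :
    ∫ x in s, g x ∂(gaussianReal m v) = ∫ x in s, gaussianPDFReal m v x * g x := by
  rw [gaussianReal_of_var_ne_zero _ hv]
  have hd : volume.withDensity (gaussianPDF m v)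
      = volume.withDensity (fun x => (((gaussianPDFReal m v x).toNNReal : ℝ≥0) : ℝ≥0∞)) := rfl
  rw [hd, setIntegral_withDensity_eq_setIntegral_smul
    ((measurable_gaussianPDFReal m v).real_toNNReal) g hs]
  refine integral_congr_ae (Filter.Eventually.of_forall fun x => ?_)
  simp only [Function.comp_apply, NNReal.smul_def, smul_eq_mul,
    Real.coe_toNNReal _ (gaussianPDFReal_nonneg m v x)]

lemma setIntegral_pdf_aux {m : ℝ} {v : ℝ≥0} (hv : v ≠ 0) {s : Set ℝ} (hs : MeasurableSet s) :
    ∫ x in s, gaussianPDFReal m v x = ((gaussianReal m v) s).toReal := by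
  rw [gaussianReal_apply_eq_integral m hv s,
    ENNReal.toReal_ofReal (setIntegral_nonneg hs fun x _ => gaussianPDFReal_nonneg m v x)]

theorem geom_asian_key_lemma
    {Ω : Type*} [MeasurableSpace Ω] (P : Measure Ω) [IsProbabilityMeasure P]
    (X : Ω → ℝ) (μ σ K : ℝ) (hσ : 0 < σ) (hK : 0 < K)
    (hX : Measure.map X P = gaussianReal μ (Real.toNNReal (σ ^ 2))) :
    ∫ ω, max (Real.exp (X ω) - K) 0 ∂P =
      Real.exp (μ + σ ^ 2 / 2) * stdNormalCDF ((μ - Real.log K) / σ + σ)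
        - K * stdNormalCDF ((μ - Real.log K) / σ) := by
  set v : ℝ≥0 := (σ^2).toNNReal with hv_def
  have hv : v ≠ 0 := by
    refine (Real.toNNReal_pos.mpr (by positivity)).ne'
  have hXm : AEMeasurable X P := aemeasurable_of_map_neZero (by rw [hX]; infer_instance)
  have hg : AEStronglyMeasurable (fun x : ℝ => max (Real.exp x - K) 0) (Measure.map X P) :=
    (Continuous.max (by continuity) continuous_const).aestronglyMeasurable
  have step1 : ∫ ω, max (Real.exp (X ω) - K) 0 ∂P
      = ∫ x, max (Real.exp x - K) 0 ∂(gaussianReal μ v) := by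
    rw [← hX, integral_map hXm hg]
  set L := Real.log K with hL
  have step2 : (fun x : ℝ => max (Real.exp x - K) 0)
      = Set.indicator (Set.Ici L) (fun x => Real.exp x - K) := by
    funext x
    by_cases h : L ≤ x
    · rw [Set.indicator_of_mem (Set.mem_Ici.mpr h), max_eq_left]
      have : K ≤ Real.exp x := by
        calc K = Real.exp L := (Real.exp_log hK).symm
        _ ≤ Real.exp x := Real.exp_le_exp.mpr h
      linarith
    · rw [Set.indicator_of_notMem (fun hx => h (Set.mem_Ici.mp hx)), max_eq_right]
      have : Real.exp x < K := by
        calc Real.exp x < Real.exp L := Real.exp_lt_exp.mpr (lt_of_not_ge h)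
        _ = K := Real.exp_log hK
      linarith
  rw [step1, step2, integral_indicator measurableSet_Ici,
    setIntegral_gauss_density hv _ measurableSet_Ici]
  have step3 : ∀ x : ℝ, gaussianPDFReal μ v x * (Real.exp x - K)
      = Real.exp (μ + σ^2/2) * gaussianPDFReal (μ + σ^2) v x - K * gaussianPDFReal μ v x := by
    intro x
    linear_combination pdf_exp_aux μ σ hσ x
  simp only [step3]
  rw [integral_sub
    (((integrable_gaussianPDFReal (μ + σ^2) v).const_mul _).restrict)
    (((integrable_gaussianPDFReal μ v).const_mul _).restrict),
    integral_const_mul, integral_const_mul,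
    setIntegral_pdf_aux hv measurableSet_Ici, setIntegral_pdf_aux hv measurableSet_Ici]
  rw [hv_def, gauss_Ici_aux (μ + σ^2) σ L hσ, gauss_Ici_aux μ σ L hσ]
  have harg : (μ + σ^2 - L)/σ = (μ - L)/σ + σ := by
    field_simp
    ring
  rw [harg]
end

section
/- If X is normally distributed with mean μ and variance σ² (σ > 0), then for any positive integer n and K > 0, E[(e^{nX} − K)⁺] = e^{nμ + n²σ²/2} Φ(f₂ + nσ) − K Φ(f₂), where f₂ = (μ − (1/n) ln K)/σ. -/
/-!
Since `n > 0`, the payoff `(e^{nx} - K)⁺` vanishes exactly for `x < c := log K / n`, so the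
expectation splits into `E[e^{nX}; X ≥ c] - K P(X ≥ c)`. Multiplying the `N(m, v)` density by
`e^{nx}` gives `e^{nm + n²v/2}` times the `N(m + nv, v)` density (exponential tilting), and the
tail `N(m, σ²)[c, ∞)` equals `Φ((m - c) / σ)` by the affine change of variables `x ↦ (m - x) / σ`.
-/

open MeasureTheory ProbabilityTheory Real

open scoped NNReal

lemma exp_mul_mul_gaussianPDFReal (m : ℝ) (v : ℝ≥0) (a x : ℝ) :
    rexp (a * x) * gaussianPDFReal m v x
      = rexp (a * m + a ^ 2 * v / 2) * gaussianPDFReal (m + a * v) v x := by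
  rcases eq_or_ne v 0 with rfl | hv
  · simp [gaussianPDFReal_zero_var]
  have hv' : (v : ℝ) ≠ 0 := by exact_mod_cast hv
  rw [gaussianPDFReal, gaussianPDFReal, mul_left_comm, ← exp_add, mul_left_comm (rexp _),
    ← exp_add]
  congr 2
  field_simp
  ring

lemma setIntegral_exp_mul_gaussianReal (m : ℝ) (v : ℝ≥0) (a : ℝ) (s : Set ℝ) :
    ∫ x in s, rexp (a * x) ∂gaussianReal m v
      = rexp (a * m + a ^ 2 * v / 2) * (gaussianReal (m + a * v) v).real s := by
  classical
  rcases eq_or_ne v 0 with rfl | hv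
  · by_cases hm : m ∈ s <;>
      simp [gaussianReal_zero_var, setIntegral_dirac, measureReal_def, Measure.dirac_apply, hm]
  rw [gaussianReal_of_var_ne_zero _ hv, setIntegral_withDensity_eq_setIntegral_toReal_smul' s
    (measurable_gaussianPDF m v) (ae_of_all _ fun _ ↦ gaussianPDF_lt_top)]
  simp_rw [toReal_gaussianPDF, smul_eq_mul, mul_comm (gaussianPDFReal m v _),
    exp_mul_mul_gaussianPDFReal, integral_const_mul]
  rw [measureReal_def, gaussianReal_apply_eq_integral _ hv,
    ENNReal.toReal_ofReal (setIntegral_nonneg_of_ae (ae_of_all _ (gaussianPDFReal_nonneg _ _)))]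

lemma gaussianReal_real_Ici {σ : ℝ} (hσ : 0 < σ) (m c : ℝ) :
    (gaussianReal m (σ ^ 2).toNNReal).real (Set.Ici c) = stdNormalCDF ((m - c) / σ) := by
  have hstd : (gaussianReal m (σ ^ 2).toNNReal).map (fun x ↦ (m - x) / σ) = gaussianReal 0 1 := by
    rw [show (fun x ↦ (m - x) / σ) = (· / σ) ∘ (m - ·) from rfl,
      ← Measure.map_map (by fun_prop) (by fun_prop), gaussianReal_map_const_sub,
      gaussianReal_map_div_const]
    congr 1
    · simp
    · ext; simp [hσ.ne', sq_nonneg]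
  have hpre : (fun x ↦ (m - x) / σ) ⁻¹' Set.Iic ((m - c) / σ) = Set.Ici c := by
    ext x
    simp only [Set.mem_preimage, Set.mem_Iic, Set.mem_Ici, div_le_div_iff_of_pos_right hσ,
      sub_le_sub_iff_left]
  rw [stdNormalCDF, ← measureReal_def, ← hstd,
    map_measureReal_apply (by fun_prop) measurableSet_Iic, hpre]

lemma max_exp_mul_sub_eq_indicator {a K : ℝ} (ha : 0 < a) (hK : 0 < K) (x : ℝ) :
    max (rexp (a * x) - K) 0 = (Set.Ici (log K / a)).indicator (fun x ↦ rexp (a * x) - K) x := by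
  have hiff : log K / a ≤ x ↔ K ≤ rexp (a * x) := by
    rw [div_le_iff₀ ha, ← exp_le_exp, exp_log hK, mul_comm]
  by_cases hx : log K / a ≤ x
  · rw [Set.indicator_of_mem (Set.mem_Ici.2 hx), max_eq_left (sub_nonneg.2 (hiff.1 hx))]
  · rw [Set.indicator_of_notMem (mt Set.mem_Ici.1 hx),
      max_eq_right (sub_nonpos.2 (not_le.1 (hiff.not.1 hx)).le)]

lemma integral_max_exp_mul_sub_gaussianReal (m : ℝ) (v : ℝ≥0) {a K : ℝ} (ha : 0 < a)
    (hK : 0 < K) :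
    ∫ x, max (rexp (a * x) - K) 0 ∂gaussianReal m v
      = rexp (a * m + a ^ 2 * v / 2) * (gaussianReal (m + a * v) v).real (Set.Ici (log K / a))
        - K * (gaussianReal m v).real (Set.Ici (log K / a)) := by
  simp_rw [max_exp_mul_sub_eq_indicator ha hK]
  rw [integral_indicator measurableSet_Ici,
    integral_sub (integrable_exp_mul_gaussianReal a).restrict (integrable_const K),
    setIntegral_exp_mul_gaussianReal, setIntegral_const, smul_eq_mul, mul_comm K]

theorem geom_asian_power_key_lemma_general
    {Ω : Type*} [MeasurableSpace Ω] (P : Measure Ω)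
    (X : Ω → ℝ) (μ σ K : ℝ) (n : ℕ) (hn : 1 ≤ n) (hσ : 0 < σ) (hK : 0 < K)
    (hX : Measure.map X P = gaussianReal μ (Real.toNNReal (σ ^ 2))) :
    ∫ ω, max (Real.exp ((n : ℝ) * X ω) - K) 0 ∂P =
      Real.exp ((n : ℝ) * μ + (n : ℝ) ^ 2 * σ ^ 2 / 2)
          * stdNormalCDF ((μ - (1 / (n : ℝ)) * Real.log K) / σ + (n : ℝ) * σ)
        - K * stdNormalCDF ((μ - (1 / (n : ℝ)) * Real.log K) / σ) := by
  have hn0 : (0 : ℝ) < n := by exact_mod_cast hn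
  -- `Measure.map` sends a map that is not a.e.-measurable to `0`, which is not Gaussian.
  have hXm : AEMeasurable X P := aemeasurable_of_map_neZero (by rw [hX]; infer_instance)
  have hvar : ((σ ^ 2).toNNReal : ℝ) = σ ^ 2 := Real.coe_toNNReal _ (sq_nonneg σ)
  rw [← integral_map (f := fun x : ℝ ↦ max (rexp (n * x) - K) 0) hXm (by fun_prop), hX,
    integral_max_exp_mul_sub_gaussianReal _ _ hn0 hK, gaussianReal_real_Ici hσ,
    gaussianReal_real_Ici hσ, hvar]
  congr 3
  · field_simp
    ring
  · ring

theorem geom_asian_power_key_lemma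
    {Ω : Type*} [MeasurableSpace Ω] (P : Measure Ω) [IsProbabilityMeasure P]
    (X : Ω → ℝ) (μ σ K : ℝ) (n : ℕ) (hn : 1 ≤ n) (hσ : 0 < σ) (hK : 0 < K)
    (hX : Measure.map X P = gaussianReal μ (Real.toNNReal (σ ^ 2))) :
    ∫ ω, max (Real.exp ((n : ℝ) * X ω) - K) 0 ∂P =
      Real.exp ((n : ℝ) * μ + (n : ℝ) ^ 2 * σ ^ 2 / 2)
          * stdNormalCDF ((μ - (1 / (n : ℝ)) * Real.log K) / σ + (n : ℝ) * σ)
        - K * stdNormalCDF ((μ - (1 / (n : ℝ)) * Real.log K) / σ) :=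
  geom_asian_power_key_lemma_general P X μ σ K n hn hσ hK hX
end
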